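/- Recursion (L3): for every σ ∈ {0,1,…,r}^N, 𝐟(σ·r) = t^{-l}·𝐟((r-1)·σ) + q·t^{-l}·𝐟(r·σ), where l = #{i : σ_i < r}, σ·r denotes σ with the entry r appended, and (r-1)·σ and r·σ denote σ with the entry r-1 (respectively r) prepended. -/

import Mathlib

open MvPolynomial

noncomputable section

/-- The field `F = ℚ(q,a,t)` of rational functions in three variables over `ℚ`. -/
abbrev KRF : Type := FractionRing (MvPolynomial (Fin 3) ℚ)

/-- The variable `q` in `F`. -/
def fq : KRF := algebraMap (MvPolynomial (Fin 3) ℚ) KRF (X 0)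
/-- The variable `a` in `F`. -/
def fa : KRF := algebraMap (MvPolynomial (Fin 3) ℚ) KRF (X 1)
/-- The variable `t` in `F`. -/
def ft : KRF := algebraMap (MvPolynomial (Fin 3) ℚ) KRF (X 2)

/-- The number `|v|` of ones in a binary sequence. -/
def onesCt (v : List Bool) : ℕ := v.count true

/-- A p-family: a function on (balanced) pairs of binary sequences with values in
`F = ℚ(q,a,t)` satisfying the five recursion rules (1)-(5). -/
def IsPFamily (p : List Bool → List Bool → KRF) : Prop :=
  (∀ n : ℕ, p [] (List.replicate n false) = ((1 + fa) / (1 - fq)) ^ n) ∧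
  (∀ m : ℕ, p (List.replicate m false) [] = ((1 + fa) / (1 - fq)) ^ m) ∧
  (∀ v w : List Bool, onesCt v = onesCt w →
      p (v ++ [true]) (w ++ [true]) = (ft ^ onesCt v + fa) * p v w) ∧
  (∀ v w : List Bool, onesCt v = onesCt w + 1 →
      p (v ++ [false]) (w ++ [true]) = p v (true :: w)) ∧
  (∀ v w : List Bool, onesCt v + 1 = onesCt w →
      p (v ++ [true]) (w ++ [false]) = p (true :: v) w) ∧
  (∀ v w : List Bool, onesCt v = onesCt w →
      p (v ++ [false]) (w ++ [false]) =
        ft ^ (-(onesCt v : ℤ)) * p (true :: v) (true :: w) +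
          fq * ft ^ (-(onesCt v : ℤ)) * p (false :: v) (false :: w))

/-- The symbols `1`, `0`, `∗` used in fillings. -/
inductive Symb : Type
  | one : Symb
  | zero : Symb
  | star : Symb
deriving DecidableEq

/-- An admissible filling of the `r × N` grid (rows indexed top-to-bottom by `Fin r`,
columns left-to-right by `Fin N`): every row and every column contains at most one `1`,
every cell strictly below a `1` in the same column is `∗`, and every other cell is `0`
(i.e. every `∗` lies strictly below a `1` in its column). -/
def IsAdmissible {r N : ℕ} (T : Fin r → Fin N → Symb) : Prop :=
  (∀ (i : Fin r) (j j' : Fin N), T i j = Symb.one → T i j' = Symb.one → j = j') ∧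
  (∀ (j : Fin N) (i i' : Fin r), T i j = Symb.one → T i' j = Symb.one → i = i') ∧
  (∀ (i i' : Fin r) (j : Fin N), T i j = Symb.one → i < i' → T i' j = Symb.star) ∧
  (∀ (i : Fin r) (j : Fin N), T i j = Symb.star → ∃ i' : Fin r, i' < i ∧ T i' j = Symb.one)

/-- `σ(T)_j`: the number of cells labeled `0` in the `j`-th column of `T`. -/
def colZeros {r N : ℕ} (T : Fin r → Fin N → Symb) (j : Fin N) : ℕ :=
  (Finset.univ.filter (fun i => T i j = Symb.zero)).card

/-- `v(T)_j = 1` iff the `j`-th column of `T` is occupied (contains a `1`). -/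
def vFun {r N : ℕ} (T : Fin r → Fin N → Symb) (j : Fin N) : Bool :=
  decide (∃ i : Fin r, T i j = Symb.one)

/-- The binary sequence `v(T)` as a list. -/
def vList {r N : ℕ} (T : Fin r → Fin N → Symb) : List Bool :=
  (List.finRange N).map (vFun T)

/-- The binary sequence `w(T)`: read the entries of `T` from left to right along each row,
taking the rows from bottom to top, skipping all cells labeled `∗` (with `1 ↦ true`,
`0 ↦ false`). -/
def wList {r N : ℕ} (T : Fin r → Fin N → Symb) : List Bool :=
  ((List.finRange r).reverse.map (fun i =>
    (List.finRange N).filterMap (fun j =>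
      match T i j with
      | Symb.one => some true
      | Symb.zero => some false
      | Symb.star => none))).flatten

/-!
An admissible filling is determined by `σ`: column `j` holds `σ j` zeros, then a `1` if
`σ j < r`, then stars. Appending a column with `r` zeros appends a `0` to `v` and to every row;
prepending a column with `r - 1` (resp. `r`) zeros prepends `1` (resp. `0`) to `v` and to the
bottom row, and `0` to every other row. Hence, with `v = v(σ)` and `w'` the word `w(r·σ)`
without its first letter, the three pairs are `(v·0, w'·0)`, `(1·v, 1·w')`, `(0·v, 0·w')`, and the
claim is rule (5). The pair `(v, w')` is balanced because the `1`s of an admissible filling are as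
many when counted along rows as along columns, and `l = |v|`.
-/

open Finset

lemma countP_finRange {n : ℕ} (p : Fin n → Bool) : (List.finRange n).countP p = #{j | p j} := by
  rw [Fin.univ_def]
  simp [Finset.filter, List.countP_eq_length_filter]

lemma onesCt_map_finRange {n : ℕ} (f : Fin n → Bool) :
    onesCt ((List.finRange n).map f) = #{j | f j} := by
  rw [onesCt, List.count_eq_countP, List.countP_map, countP_finRange]
  simp

section Counting

variable {r N : ℕ} {T : Fin r → Fin N → Symb}

lemma onesCt_vList : onesCt (vList T) = #{j | ∃ i, T i j = Symb.one} := by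
  rw [vList, onesCt_map_finRange]
  simp [vFun]

lemma onesCt_wList : onesCt (wList T) = ∑ i, #{j | T i j = Symb.one} := by
  rw [onesCt, wList, List.count_flatten, List.map_map, List.map_reverse, List.sum_reverse,
    ← Fin.sum_univ_def]
  refine Finset.sum_congr rfl fun i _ => ?_
  rw [Function.comp_apply, List.count_eq_countP, List.countP_filterMap, countP_finRange]
  congr 1
  ext j
  cases h : T i j <;> simp [h]

theorem IsAdmissible.onesCt_wList_eq_onesCt_vList (hT : IsAdmissible T) :
    onesCt (wList T) = onesCt (vList T) := by
  set ones : Finset (Fin r × Fin N) := {x | T x.1 x.2 = Symb.one}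
  have h_rows : ∑ i, #{j | T i j = Symb.one} = #ones := by
    simp only [ones, Finset.card_filter, Fintype.sum_prod_type]
  have h_cols : #{j | ∃ i, T i j = Symb.one} = #(ones.image Prod.snd) := by
    congr 1
    ext j
    simp [ones]
  have h_inj : Set.InjOn Prod.snd (ones : Set (Fin r × Fin N)) := by
    rintro ⟨i, j⟩ hij ⟨i', j'⟩ hij' (rfl : j = j')
    simp only [ones, coe_filter, mem_univ, true_and, Set.mem_ofPred_eq] at hij hij'
    rw [hT.2.1 j i i' hij hij']
  rw [onesCt_wList, onesCt_vList, h_rows, h_cols, card_image_of_injOn h_inj]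

end Counting

/-- The filling `T(σ)`. -/
def fillingOf (r : ℕ) {N : ℕ} (σ : Fin N → ℕ) : Fin r → Fin N → Symb :=
  fun i j => if (i : ℕ) < σ j then Symb.zero else if (i : ℕ) = σ j then Symb.one else Symb.star

section Admissible

variable {r N : ℕ} {T : Fin r → Fin N → Symb}

lemma IsAdmissible.apply_eq_of_apply_eq_one (hT : IsAdmissible T) {i₀ : Fin r} {j : Fin N}
    (h₀ : T i₀ j = Symb.one) (i : Fin r) :
    T i j = if i < i₀ then Symb.zero else if i = i₀ then Symb.one else Symb.star := by
  obtain ⟨-, hcol, hbelow, hstar⟩ := hT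
  rcases lt_trichotomy i i₀ with hlt | rfl | hgt
  · rw [if_pos hlt]
    cases hij : T i j with
    | one => exact absurd (hcol j i i₀ hij h₀) hlt.ne
    | zero => rfl
    | star =>
      obtain ⟨i', hi', h'⟩ := hstar i j hij
      obtain rfl := hcol j i' i₀ h' h₀
      exact absurd (hi'.trans hlt) (lt_irrefl _)
  · simpa using h₀
  · rw [if_neg hgt.not_gt, if_neg hgt.ne', hbelow i₀ i j h₀ hgt]

lemma IsAdmissible.apply_eq_zero_of_forall_ne_one (hT : IsAdmissible T) {j : Fin N}
    (hj : ∀ i, T i j ≠ Symb.one) (i : Fin r) : T i j = Symb.zero := by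
  cases hij : T i j with
  | one => exact absurd hij (hj i)
  | zero => rfl
  | star =>
    obtain ⟨i', -, h'⟩ := hT.2.2.2 i j hij
    exact absurd h' (hj i')

theorem IsAdmissible.eq_fillingOf_colZeros (hT : IsAdmissible T) :
    T = fillingOf r (colZeros T) := by
  funext i j
  by_cases hone : ∃ i₀, T i₀ j = Symb.one
  · obtain ⟨i₀, h₀⟩ := hone
    have hzeros : colZeros T j = i₀ := by
      rw [colZeros, ← Fin.card_Iio]
      congr 1
      ext i
      rw [mem_filter_univ, hT.apply_eq_of_apply_eq_one h₀, mem_Iio]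
      split_ifs <;> simp_all
    simp only [fillingOf, hzeros, hT.apply_eq_of_apply_eq_one h₀, Fin.lt_def, Fin.val_inj]
  · simp only [not_exists] at hone
    have hzeros : colZeros T j = r := by
      rw [colZeros, filter_true_of_mem fun i _ => hT.apply_eq_zero_of_forall_ne_one hone i,
        card_univ, Fintype.card_fin]
    rw [fillingOf, hzeros, if_pos i.isLt, hT.apply_eq_zero_of_forall_ne_one hone]

theorem IsAdmissible.eq_fillingOf (hT : IsAdmissible T) {σ : Fin N → ℕ}
    (hσ : ∀ j, colZeros T j = σ j) : T = fillingOf r σ := by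
  rw [hT.eq_fillingOf_colZeros, funext hσ]

end Admissible

lemma List.flatten_map_append_singleton {α : Type*} (x : α) (a : List α) (l : List (List α)) :
    ((a :: l).map (· ++ [x])).flatten = a ++ (l.map (x :: ·)).flatten ++ [x] := by
  induction l generalizing a with
  | nil => simp
  | cons b l ih => simpa using ih b

/-- The letter of `w` read off row `i` of a column with `c` zeros. -/
def cellLetter (i c : ℕ) : Option Bool :=
  if i < c then some false else if i = c then some true else none

def rowWord {N : ℕ} (σ : Fin N → ℕ) (i : ℕ) : List Bool :=
  (List.finRange N).filterMap fun j => cellLetter i (σ j)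

section Words

variable {r N : ℕ} (σ : Fin N → ℕ)

lemma vList_fillingOf :
    vList (fillingOf r σ) = (List.finRange N).map fun j => decide (σ j < r) := by
  refine List.map_congr_left fun j _ => decide_eq_decide.mpr ⟨?_, fun h => ⟨⟨σ j, h⟩, ?_⟩⟩
  · rintro ⟨i, hi⟩
    simp only [fillingOf] at hi
    split_ifs at hi with h₁ h₂
    exact h₂ ▸ i.isLt
  · simp [fillingOf]

lemma wList_fillingOf :
    wList (fillingOf r σ) = ((List.range r).reverse.map (rowWord σ)).flatten := by
  have hletter : ∀ (i : Fin r) (j : Fin N),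
      (match fillingOf r σ i j with
        | Symb.one => some true
        | Symb.zero => some false
        | Symb.star => none) = cellLetter i (σ j) := by
    intro i j
    simp only [fillingOf, cellLetter]
    split_ifs <;> rfl
  simp only [wList, hletter, ← List.map_coe_finRange_eq_range, List.map_reverse, List.map_map]
  rfl

lemma vList_fillingOf_snoc (c : ℕ) :
    vList (fillingOf r (Fin.snoc σ c : Fin (N + 1) → ℕ)) =
      vList (fillingOf r σ) ++ [decide (c < r)] := by
  simp [vList_fillingOf, List.finRange_succ_last]

lemma vList_fillingOf_cons (c : ℕ) :
    vList (fillingOf r (Fin.cons c σ : Fin (N + 1) → ℕ)) =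
      decide (c < r) :: vList (fillingOf r σ) := by
  simp [vList_fillingOf, List.finRange_succ]

lemma rowWord_snoc {i c : ℕ} (h : i < c) :
    rowWord (Fin.snoc σ c : Fin (N + 1) → ℕ) i = rowWord σ i ++ [false] := by
  simp [rowWord, List.finRange_succ_last, List.filterMap_append, cellLetter, h]

lemma rowWord_cons (i c : ℕ) :
    rowWord (Fin.cons c σ : Fin (N + 1) → ℕ) i = (cellLetter i c).toList ++ rowWord σ i := by
  simp only [rowWord, List.finRange_succ, List.filterMap_cons, List.filterMap_map, Fin.cons_zero,
    Function.comp_def, Fin.cons_succ]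
  cases cellLetter i c <;> rfl

/-- For fillings with `r + 1` rows: the word `w((r+1)·σ)` without its leading `0`. -/
def wTail (r : ℕ) : List Bool :=
  rowWord σ r ++ ((List.range r).reverse.map fun i => false :: rowWord σ i).flatten

lemma wList_fillingOf_snoc :
    wList (fillingOf (r + 1) (Fin.snoc σ (r + 1) : Fin (N + 1) → ℕ)) = wTail σ r ++ [false] := by
  rw [wList_fillingOf,
    List.map_congr_left fun i hi => rowWord_snoc σ (List.mem_range.mp (List.mem_reverse.mp hi)),
    List.range_succ, List.reverse_append, List.reverse_singleton, List.singleton_append]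
  simpa [wTail, Function.comp_def] using List.flatten_map_append_singleton false (rowWord σ r)
    ((List.range r).reverse.map (rowWord σ))

lemma wList_fillingOf_cons {c : ℕ} (hc : r ≤ c) :
    wList (fillingOf (r + 1) (Fin.cons c σ : Fin (N + 1) → ℕ)) =
      (cellLetter r c).toList ++ wTail σ r := by
  have hlower : ∀ i ∈ (List.range r).reverse, rowWord (Fin.cons c σ : Fin (N + 1) → ℕ) i =
      false :: rowWord σ i := fun i hi => by
    rw [rowWord_cons, cellLetter,
      if_pos ((List.mem_range.mp (List.mem_reverse.mp hi)).trans_le hc)]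
    rfl
  rw [wList_fillingOf, List.range_succ, List.reverse_append, List.reverse_singleton,
    List.singleton_append, List.map_cons, List.map_congr_left hlower]
  simp [wTail, rowWord_cons]

end Words

theorem f_recursion_L3_general (p : List Bool → List Bool → KRF) (hp : IsPFamily p)
    (r : ℕ) (hr : 1 ≤ r) (N : ℕ) (σ : Fin N → ℕ)
    (T1 : Fin r → Fin (N + 1) → Symb) (hT1 : IsAdmissible T1)
    (hT1σ : ∀ j, colZeros T1 j = (Fin.snoc σ r : Fin (N + 1) → ℕ) j)
    (T2 : Fin r → Fin (N + 1) → Symb) (hT2 : IsAdmissible T2)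
    (hT2σ : ∀ j, colZeros T2 j = (Fin.cons (r - 1) σ : Fin (N + 1) → ℕ) j)
    (T3 : Fin r → Fin (N + 1) → Symb) (hT3 : IsAdmissible T3)
    (hT3σ : ∀ j, colZeros T3 j = (Fin.cons r σ : Fin (N + 1) → ℕ) j) :
    p (vList T1) (wList T1) =
      ft ^ (-(((Finset.univ.filter (fun i => σ i < r)).card : ℤ))) *
          p (vList T2) (wList T2) +
        fq * ft ^ (-(((Finset.univ.filter (fun i => σ i < r)).card : ℤ))) *
          p (vList T3) (wList T3) := by
  obtain ⟨r, rfl⟩ := Nat.exists_eq_add_of_le' hr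
  rw [Nat.add_sub_cancel] at hT2σ
  obtain rfl := hT1.eq_fillingOf hT1σ
  obtain rfl := hT2.eq_fillingOf hT2σ
  obtain rfl := hT3.eq_fillingOf hT3σ
  have hl : #{i | σ i < r + 1} = onesCt (vList (fillingOf (r + 1) σ)) := by
    rw [vList_fillingOf, onesCt_map_finRange]
    simp
  have hbalanced : onesCt (vList (fillingOf (r + 1) σ)) = onesCt (wTail σ r) := by
    simpa [onesCt, vList_fillingOf_snoc, wList_fillingOf_snoc] using
      hT1.onesCt_wList_eq_onesCt_vList.symm
  rw [vList_fillingOf_snoc, wList_fillingOf_snoc, vList_fillingOf_cons, vList_fillingOf_cons,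
    wList_fillingOf_cons σ le_rfl, wList_fillingOf_cons σ (Nat.le_succ r), hl]
  simpa [cellLetter] using hp.2.2.2.2.2 _ _ hbalanced

/-- Recursion (L3): `𝐟(σ·r) = t^{-l}·𝐟((r-1)·σ) + q·t^{-l}·𝐟(r·σ)` where
`l = #{i : σ_i < r}`.  Here `𝐟(σ) = p(v(σ), w(σ))`, with `T1`, `T2`, `T3` the unique
admissible fillings whose column-zero-counts are `σ·r`, `(r-1)·σ`, `r·σ` respectively. -/
theorem f_recursion_L3 (p : List Bool → List Bool → KRF) (hp : IsPFamily p)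
    (r : ℕ) (hr : 1 ≤ r) (N : ℕ) (σ : Fin N → ℕ) (hσ : ∀ i, σ i ≤ r)
    (T1 : Fin r → Fin (N + 1) → Symb) (hT1 : IsAdmissible T1)
    (hT1σ : ∀ j, colZeros T1 j = (Fin.snoc σ r : Fin (N + 1) → ℕ) j)
    (T2 : Fin r → Fin (N + 1) → Symb) (hT2 : IsAdmissible T2)
    (hT2σ : ∀ j, colZeros T2 j = (Fin.cons (r - 1) σ : Fin (N + 1) → ℕ) j)
    (T3 : Fin r → Fin (N + 1) → Symb) (hT3 : IsAdmissible T3)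
    (hT3σ : ∀ j, colZeros T3 j = (Fin.cons r σ : Fin (N + 1) → ℕ) j) :
    p (vList T1) (wList T1) =
      ft ^ (-(((Finset.univ.filter (fun i => σ i < r)).card : ℤ))) *
          p (vList T2) (wList T2) +
        fq * ft ^ (-(((Finset.univ.filter (fun i => σ i < r)).card : ℤ))) *
          p (vList T3) (wList T3) :=
  f_recursion_L3_general p hp r hr N σ T1 hT1 hT1σ T2 hT2 hT2σ T3 hT3 hT3σ
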